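/- Let n > 5 be an integer. Then OCN(L_n) ≤ 4(n-1)(n-2), where L_n is the n-ladder graph. -/

import Mathlib

noncomputable section

/-- A rectilinear drawing of a finite simple graph `G`: an injective map of the
vertices to points of the plane `ℝ × ℝ` in general position (no three collinear);
each edge is drawn as the straight-line segment between the images of its endpoints. -/
structure OrchardDrawing {V : Type*} (G : SimpleGraph V) where
  pos : V → ℝ × ℝ
  inj : Function.Injective pos
  genPos : ∀ u v w : V, u ≠ v → u ≠ w → v ≠ w →
    ¬ Collinear ℝ ({pos u, pos v, pos w} : Set (ℝ × ℝ))

/-- The number of Orchard crossings of a drawing: the number of pairs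
`(e, e')` where `e = {s,t}` is an edge of `G` and `e' = {u,v}` is an unordered pair of
distinct vertices with `{u,v} ≠ {s,t}` such that the straight line through the images of
`u` and `v` meets the open segment joining the images of `s` and `t`.
This equals `Σ_{(s,t) ∈ E} c(s,t)`. -/
def orchardCrossings {V : Type*} {G : SimpleGraph V} (D : OrchardDrawing G) : ℕ :=
  Nat.card {q : Sym2 V × Sym2 V //
    q.1 ∈ G.edgeSet ∧ q.2 ≠ q.1 ∧ ¬ q.2.IsDiag ∧
    ∃ u v s t : V, q.2 = s(u, v) ∧ q.1 = s(s, t) ∧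
      ∃ p ∈ openSegment ℝ (D.pos s) (D.pos t),
        Collinear ℝ ({D.pos u, D.pos v, p} : Set (ℝ × ℝ))}

/-- The Orchard crossing number of a finite simple graph: the minimum of the number of
Orchard crossings over all rectilinear drawings. -/
def OCN {V : Type*} [Fintype V] (G : SimpleGraph V) : ℕ :=
  sInf {m : ℕ | ∃ D : OrchardDrawing G, orchardCrossings D = m}

/-- The `n`-ladder graph: vertices `(i, k)` with `i : Fin n`, `k : Fin 2`;
edges are the two paths `(i, k)–(i+1, k)` (for `k = 0, 1` and `i = 0, …, n-2`)
together with the rungs `(i, 0)–(i, 1)`. -/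
def ladderGraph (n : ℕ) : SimpleGraph (Fin n × Fin 2) :=
  SimpleGraph.fromRel (fun u v =>
    (u.2 = v.2 ∧ (u.1 : ℕ) + 1 = (v.1 : ℕ)) ∨ (u.1 = v.1 ∧ u.2 = 0 ∧ v.2 = 1))

/-! Place the vertices on the parabola `y = x²` at integer abscissae, in the order
`u₀ w₀ w₁ u₁ u₂ w₂ w₃ u₃ …`. For points in convex position, the line through two of them meets
the open chord between two others only if the two chords interlace. The rungs and every other
path edge join consecutive points, so no line crosses them; each of the remaining `n - 1` edges
spans two points, and a line crossing it joins one of these to one of the `2n - 4` points outside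
the edge, so it has at most `2 (2n - 4)` Orchard crossings. -/

def parabola (x : ℝ) : ℝ × ℝ := (x, x ^ 2)

theorem parabola_injective : Function.Injective parabola := fun _ _ h => congrArg Prod.fst h

theorem snd_eq_of_collinear_parabola {a b : ℝ} (hab : a ≠ b) {p : ℝ × ℝ}
    (h : Collinear ℝ {parabola a, parabola b, p}) : p.2 = (a + b) * p.1 - a * b := by
  have hp := h.mem_affineSpan_of_mem_of_ne (p₁ := parabola a) (p₂ := parabola b) (p₃ := p)
    (by simp) (by simp) (by simp) (parabola_injective.ne hab)
  obtain ⟨r, rfl⟩ := (mem_affineSpan_pair_iff_exists_lineMap_eq).mp hp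
  simp only [AffineMap.lineMap_apply_module, parabola, Prod.smul_mk, Prod.mk_add_mk, smul_eq_mul]
  ring

theorem not_collinear_parabola {a b c : ℝ} (hab : a ≠ b) (hac : a ≠ c) (hbc : b ≠ c) :
    ¬ Collinear ℝ {parabola a, parabola b, parabola c} := fun h => by
  have hline := snd_eq_of_collinear_parabola hab h
  simp only [parabola] at hline
  have hc : (c - a) * (c - b) = 0 := by linear_combination hline
  rcases mul_eq_zero.mp hc with h | h
  · exact hac (sub_eq_zero.mp h).symm
  · exact hbc (sub_eq_zero.mp h).symm

theorem mul_neg_of_collinear_parabola_of_mem_openSegment {a b c d : ℝ} (hab : a ≠ b)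
    (hcd : c ≠ d) (hne : s(a, b) ≠ s(c, d)) {p : ℝ × ℝ}
    (hp : p ∈ openSegment ℝ (parabola a) (parabola b))
    (hcol : Collinear ℝ {parabola c, parabola d, p}) :
    (a - c) * (a - d) * ((b - c) * (b - d)) < 0 := by
  obtain ⟨x, y, hx, hy, hxy, rfl⟩ := hp
  have hline := snd_eq_of_collinear_parabola hcd hcol
  simp only [parabola, Prod.smul_mk, Prod.mk_add_mk, smul_eq_mul] at hline
  -- `(z - c) * (z - d)` is the height of `parabola z` above the line through `c` and `d`.
  have key : x * ((a - c) * (a - d)) + y * ((b - c) * (b - d)) = 0 := by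
    linear_combination hline + c * d * hxy
  have ha : (a - c) * (a - d) ≠ 0 := by
    intro ha
    have hb : (b - c) * (b - d) = 0 := by
      simpa [ha, hy.ne'] using key
    apply hne
    rcases mul_eq_zero.mp ha with h₁ | h₁ <;> rcases mul_eq_zero.mp hb with h₂ | h₂ <;>
      rw [sub_eq_zero] at h₁ h₂ <;> subst h₁ h₂
    all_goals first | exact absurd rfl hab | exact rfl | exact Sym2.eq_swap
  have : y * ((a - c) * (a - d) * ((b - c) * (b - d))) = -(x * ((a - c) * (a - d)) ^ 2) := by
    linear_combination (a - c) * (a - d) * key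
  exact neg_of_mul_neg_right (this ▸ neg_neg_of_pos (by positivity)) hy.le

namespace Sym2
variable {α β : Type*} [LinearOrder α] [LinearOrder β]

def Interlaces (e e' : Sym2 α) : Prop :=
  (e.inf < e'.inf ∧ e'.inf < e.sup ∧ e.sup < e'.sup) ∨
    (e'.inf < e.inf ∧ e.inf < e'.sup ∧ e'.sup < e.sup)

theorem inf_map_of_monotone {f : α → β} (hf : Monotone f) (e : Sym2 α) :
    (e.map f).inf = f e.inf := by
  induction e with | _ a b => simp [hf.map_min]

theorem sup_map_of_monotone {f : α → β} (hf : Monotone f) (e : Sym2 α) :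
    (e.map f).sup = f e.sup := by
  induction e with | _ a b => simp [hf.map_max]

theorem interlaces_map_iff {f : α → β} (hf : StrictMono f) {e e' : Sym2 α} :
    Interlaces (e.map f) (e'.map f) ↔ Interlaces e e' := by
  simp only [Interlaces, inf_map_of_monotone hf.monotone, sup_map_of_monotone hf.monotone,
    hf.lt_iff_lt]

end Sym2

section SignOfQuadratic
variable {R : Type*} [CommRing R] [LinearOrder R] [IsStrictOrderedRing R] {a b x : R}

theorem mem_Ioo_of_sub_mul_sub_neg (hab : a ≤ b) (h : (x - a) * (x - b) < 0) :
    x ∈ Set.Ioo a b := by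
  constructor <;> by_contra! hx <;> nlinarith

theorem lt_or_lt_of_sub_mul_sub_pos (h : 0 < (x - a) * (x - b)) : x < a ∨ b < x := by
  by_contra! hx; nlinarith [hx.1, hx.2]

theorem Sym2.interlaces_mk_of_mul_neg {a b c d : R}
    (h : (a - c) * (a - d) * ((b - c) * (b - d)) < 0) : Sym2.Interlaces s(a, b) s(c, d) := by
  wlog hab : a ≤ b generalizing a b
  · rw [Sym2.eq_swap]; exact this (by linarith [h]) (le_of_not_ge hab)
  wlog hcd : c ≤ d generalizing c d
  · rw [Sym2.eq_swap (a := c)]; exact this (by linarith [h]) (le_of_not_ge hcd)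
  have h' : (c - a) * (c - b) * ((d - a) * (d - b)) < 0 := by convert h using 1; ring
  simp only [Sym2.Interlaces, Sym2.inf_mk, Sym2.sup_mk, inf_of_le_left hab, sup_of_le_right hab,
    inf_of_le_left hcd, sup_of_le_right hcd]
  rcases mul_neg_iff.mp h' with ⟨hc, hd⟩ | ⟨hc, hd⟩
  · obtain ⟨hd₁, hd₂⟩ := mem_Ioo_of_sub_mul_sub_neg hab hd
    rcases lt_or_lt_of_sub_mul_sub_pos hc with hc | hc
    · exact Or.inr ⟨hc, hd₁, hd₂⟩
    · linarith
  · obtain ⟨hc₁, hc₂⟩ := mem_Ioo_of_sub_mul_sub_neg hab hc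
    rcases lt_or_lt_of_sub_mul_sub_pos hd with hd | hd
    · linarith
    · exact Or.inl ⟨hc₁, hc₂, hd⟩
end SignOfQuadratic

section ParabolaDrawing
variable {V : Type*} {G : SimpleGraph V}

def IsOrchardCrossing (D : OrchardDrawing G) (q : Sym2 V × Sym2 V) : Prop :=
  q.1 ∈ G.edgeSet ∧ q.2 ≠ q.1 ∧ ¬ q.2.IsDiag ∧
    ∃ u v s t : V, q.2 = s(u, v) ∧ q.1 = s(s, t) ∧
      ∃ p ∈ openSegment ℝ (D.pos s) (D.pos t),
        Collinear ℝ ({D.pos u, D.pos v, p} : Set (ℝ × ℝ))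

theorem orchardCrossings_eq_ncard (D : OrchardDrawing G) :
    orchardCrossings D = {q | IsOrchardCrossing D q}.ncard :=
  (Nat.card_coe_set_eq _).symm

theorem OCN_le_orchardCrossings [Fintype V] (D : OrchardDrawing G) :
    OCN G ≤ orchardCrossings D :=
  Nat.sInf_le ⟨D, rfl⟩

def parabolaDrawing (G : SimpleGraph V) {f : V → ℝ} (hf : Function.Injective f) :
    OrchardDrawing G where
  pos := parabola ∘ f
  inj := parabola_injective.comp hf
  genPos _ _ _ huv huw hvw := not_collinear_parabola (hf.ne huv) (hf.ne huw) (hf.ne hvw)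

theorem IsOrchardCrossing.interlaces_of_parabolaDrawing {f : V → ℝ} {hf : Function.Injective f}
    {q : Sym2 V × Sym2 V} (hq : IsOrchardCrossing (parabolaDrawing G hf) q) :
    q.1 ∈ G.edgeSet ∧ (q.1.map f).Interlaces (q.2.map f) := by
  obtain ⟨e, e'⟩ := q
  obtain ⟨hE, hne, hdiag, u, v, s, t, rfl, rfl, p, hp, hcol⟩ := hq
  refine ⟨hE, ?_⟩
  simp only [Sym2.map_mk]
  refine Sym2.interlaces_mk_of_mul_neg <|
    mul_neg_of_collinear_parabola_of_mem_openSegment (hf.ne hE.ne) (hf.ne ?_) ?_ hp hcol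
  · simpa using hdiag
  · rw [← Sym2.map_mk, ← Sym2.map_mk]
    exact (Sym2.map.injective hf).ne hne.symm

end ParabolaDrawing

-- With `uᵢ = (i, 0)` and `wᵢ = (i, 1)`, this is the order `u₀ w₀ w₁ u₁ u₂ w₂ w₃ u₃ …`.
def ladderPos {n : ℕ} (v : Fin n × Fin 2) : ℕ := 2 * v.1 + (v.1 + v.2) % 2

theorem ladderPos_lt {n : ℕ} (v : Fin n × Fin 2) : ladderPos v < 2 * n := by
  have := v.1.isLt; unfold ladderPos; omega

theorem ladderPos_injective {n : ℕ} : Function.Injective (ladderPos (n := n)) := by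
  rintro ⟨i, k⟩ ⟨j, l⟩ h
  have := k.isLt; have := l.isLt
  dsimp only [ladderPos] at h
  ext <;> dsimp only <;> omega

theorem ladderGraph_adj_ladderPos {n : ℕ} {s t : Fin n × Fin 2} (h : (ladderGraph n).Adj s t) :
    let e := s(s, t).map ladderPos
    e.sup = e.inf + 1 ∨ (e.sup = e.inf + 3 ∧ e.inf % 2 = 0) := by
  obtain ⟨-, h⟩ := (SimpleGraph.fromRel_adj _ _ _).mp h
  have := s.2.isLt; have := t.2.isLt
  simp only [Sym2.map_mk, Sym2.inf_mk, Sym2.sup_mk, ladderPos, Fin.ext_iff, Fin.val_zero,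
    Fin.val_one] at h ⊢
  omega

def ladderDrawing (n : ℕ) : OrchardDrawing (ladderGraph n) :=
  parabolaDrawing (ladderGraph n) (f := fun v => (ladderPos v : ℝ))
    (Nat.cast_injective.comp ladderPos_injective)

def IsLadderCrossingPos (n : ℕ) (e e' : Sym2 ℕ) : Prop :=
  e.sup = e.inf + 3 ∧ e.inf % 2 = 0 ∧ e.sup < 2 * n ∧ e'.sup < 2 * n ∧ e.Interlaces e'

theorem sup_map_ladderPos_lt {n : ℕ} (e : Sym2 (Fin n × Fin 2)) :
    (e.map ladderPos).sup < 2 * n := by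
  induction e with | _ s t => simpa using ⟨ladderPos_lt s, ladderPos_lt t⟩

theorem IsOrchardCrossing.isLadderCrossingPos {n : ℕ}
    {q : Sym2 (Fin n × Fin 2) × Sym2 (Fin n × Fin 2)} (hq : IsOrchardCrossing (ladderDrawing n) q) :
    IsLadderCrossingPos n (q.1.map ladderPos) (q.2.map ladderPos) := by
  obtain ⟨hE, hI⟩ := hq.interlaces_of_parabolaDrawing
  replace hI : (q.1.map ladderPos).Interlaces (q.2.map ladderPos) := by
    rwa [← Sym2.interlaces_map_iff (Nat.strictMono_cast (α := ℝ)), Sym2.map_map, Sym2.map_map]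
  obtain ⟨e, e'⟩ := q
  induction e with | _ s t =>
  have hgap := ladderGraph_adj_ladderPos hE
  dsimp only at hI hgap ⊢
  refine ⟨?_, ?_, sup_map_ladderPos_lt _, sup_map_ladderPos_lt _, hI⟩ <;>
    simp only [Sym2.Interlaces] at hI <;> omega

-- A crossing of the edge at positions `a, a + 3` is determined by the column `a / 2`, the
-- endpoint `a + 1` or `a + 2` of the line inside the edge, and its endpoint outside the edge,
-- renumbered to skip `a, …, a + 3`.
def crossingCode (e e' : Sym2 ℕ) : ℕ × ℕ × ℕ :=
  if e'.inf < e.inf then (e.inf / 2, e'.sup - (e.inf + 1), e'.inf)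
  else (e.inf / 2, e'.inf - (e.inf + 1), e'.sup - 4)

theorem IsLadderCrossingPos.crossingCode_mem {n : ℕ} {e e' : Sym2 ℕ}
    (h : IsLadderCrossingPos n e e') :
    crossingCode e e' ∈ Finset.range (n - 1) ×ˢ Finset.range 2 ×ˢ Finset.range (2 * n - 4) := by
  obtain ⟨h₁, h₂, h₃, h₄, h₅⟩ := h
  unfold crossingCode Sym2.Interlaces at *
  split_ifs <;> simp only [Finset.mem_product, Finset.mem_range] <;> omega

theorem IsLadderCrossingPos.eq_of_crossingCode_eq {n : ℕ} {e₁ e₁' e₂ e₂' : Sym2 ℕ}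
    (h₁ : IsLadderCrossingPos n e₁ e₁') (h₂ : IsLadderCrossingPos n e₂ e₂')
    (h : crossingCode e₁ e₁' = crossingCode e₂ e₂') : e₁ = e₂ ∧ e₁' = e₂' := by
  obtain ⟨h₁, h₁e, -, -, h₁'⟩ := h₁
  obtain ⟨h₂, h₂e, -, -, h₂'⟩ := h₂
  simp only [← Sym2.inf_eq_inf_and_sup_eq_sup]
  unfold crossingCode Sym2.Interlaces at *
  split_ifs at h <;> simp only [Prod.mk.injEq] at h <;> omega

theorem orchardCrossings_ladderDrawing_le (n : ℕ) :
    orchardCrossings (ladderDrawing n) ≤ 4 * (n - 1) * (n - 2) := by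
  rw [orchardCrossings_eq_ncard]
  calc _ ≤ ((Finset.range (n - 1) ×ˢ Finset.range 2 ×ˢ Finset.range (2 * n - 4) :
          Finset (ℕ × ℕ × ℕ)) : Set (ℕ × ℕ × ℕ)).ncard :=
        Set.ncard_le_ncard_of_injOn
          (fun q => crossingCode (q.1.map ladderPos) (q.2.map ladderPos))
          (fun q hq => hq.isLadderCrossingPos.crossingCode_mem)
          (fun q hq q' hq' h => by
            obtain ⟨h₁, h₂⟩ :=
              hq.isLadderCrossingPos.eq_of_crossingCode_eq hq'.isLadderCrossingPos h
            exact Prod.ext (Sym2.map.injective ladderPos_injective h₁)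
              (Sym2.map.injective ladderPos_injective h₂))
    _ = (n - 1) * (2 * (2 * n - 4)) := by simp
    _ = 4 * (n - 1) * (n - 2) := by rw [show 2 * (2 * n - 4) = 4 * (n - 2) by omega]; ring

theorem OCN_ladder_upper_general (n : ℕ) :
    OCN (ladderGraph n) ≤ 4 * (n - 1) * (n - 2) :=
  (OCN_le_orchardCrossings (ladderDrawing n)).trans (orchardCrossings_ladderDrawing_le n)

theorem OCN_ladder_upper (n : ℕ) (hn : 5 < n) :
    OCN (ladderGraph n) ≤ 4 * (n - 1) * (n - 2) :=
  OCN_ladder_upper_general n
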